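/- arXiv:math/0511197 — 5 statements merged into one kernel-verified Lean document; each statement's English description precedes it below -/
import Mathlib

section
/- Let 𝔞 be a small preadditive category, 𝒞 a Grothendieck category, and u : 𝔞 → 𝒞 an additive functor. If u is fully faithful and the objects u(A), for A ∈ 𝔞, are projective, finitely presented, and form a generating family in 𝒞, then the restricted Yoneda functor 𝒞 → Mod(𝔞), sending C to the module A ↦ Hom_𝒞(u(A), C), is an equivalence of categories. -/
/-!
Statement 0: Let 𝔞 be a small preadditive category, 𝒞 a Grothendieck category, and
`u : 𝔞 ⥤ 𝒞` an additive functor.  If `u` is fully faithful and the objects `u A` are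
projective, finitely presented and form a generating family in 𝒞, then the restricted
Yoneda functor `𝒞 ⥤ Mod 𝔞`, `C ↦ (A ↦ Hom(u A, C))`, is an equivalence.
-/

open CategoryTheory Limits Opposite

universe v u

/-- The category of right modules over a small preadditive category `𝔞`, i.e. the full
subcategory of `𝔞ᵒᵖ ⥤ Ab` consisting of additive functors. -/
abbrev ModuleCategory (𝔞 : Type v) [SmallCategory 𝔞] [Preadditive 𝔞] : Type (v + 1) :=
  ObjectProperty.FullSubcategory (fun F : 𝔞ᵒᵖ ⥤ AddCommGrpCat.{v} => F.Additive)

/-- The restricted Yoneda functor associated to an additive functor `u : 𝔞 ⥤ 𝒞`,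
sending `C` to the right `𝔞`-module `A ↦ Hom_𝒞(u A, C)`. -/
noncomputable def restrictedYoneda {𝔞 : Type v} [SmallCategory 𝔞] [Preadditive 𝔞]
    {𝒞 : Type u} [Category.{v} 𝒞] [Preadditive 𝒞] (u : 𝔞 ⥤ 𝒞) [u.Additive] :
    𝒞 ⥤ ModuleCategory 𝔞 :=
  ObjectProperty.lift _
    (preadditiveYoneda ⋙ (Functor.whiskeringLeft 𝔞ᵒᵖ 𝒞ᵒᵖ AddCommGrpCat.{v}).obj u.op)
    (fun _ => Functor.instAdditiveComp _ _)

/-!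
Each `u B` is compact, so a morphism `u B ⟶ ∐ᵢ u (f i)` factors through a finite subcoproduct;
together with full faithfulness of `u` this identifies `Hom(u B, ∐ᵢ u (f i))` with
`⨁ᵢ 𝔞(B, f i)`: the restricted Yoneda functor `R` sends coproducts of the `u A` to free modules.
Faithfulness of `R` is the generating property. For fullness, cover `C` by `p : ∐ᵢ u (f i) ⟶ C`;
a module map `R C ⟶ R D` defines `q : ∐ᵢ u (f i) ⟶ D` on the summands, `q` kills `ker p`
because the `u A` generate, and the induced `C ⟶ D` is a preimage since each `u B` is projective.
For essential surjectivity, realise a free presentation of a module `M` as a morphism between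
coproducts of the `u A` and take its cokernel; as `Hom(u B, -)` is right exact on the objects
involved (projectivity), `R` of this cokernel is `M`.
-/

universe w

namespace CategoryTheory.Limits

section CoproductOfCompact

variable {C : Type u} [Category.{v} C] [Preadditive C] {ι : Type w} (F : ι → C) [HasCoproduct F]

lemma Sigma.ι_comp_sum_π_ι [DecidableEq ι] {S : Finset ι} {i : ι} (hi : i ∈ S) :
    Sigma.ι F i ≫ ∑ j ∈ S, Sigma.π F j ≫ Sigma.ι F j = Sigma.ι F i := by
  rw [Preadditive.comp_sum, Finset.sum_eq_single_of_mem i hi]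
  · simp
  · intro j _ hji
    rw [Sigma.ι_π_of_ne_assoc F (Ne.symm hji), zero_comp]

variable [HasFiniteCoproducts C] [HasColimitsOfShape (Finset (Discrete ι)) C]
  {X : C} [PreservesFilteredColimitsOfSize.{w, w} (coyoneda.obj (op X))]

lemma Sigma.exists_finset_eq_sum_π_ι [DecidableEq ι] (g : X ⟶ ∐ F) :
    ∃ S : Finset ι, g = ∑ i ∈ S, (g ≫ Sigma.π F i) ≫ Sigma.ι F i := by
  open CoproductsFromFiniteFiltered in
  obtain ⟨S, g', hg⟩ := Types.jointly_surjective_of_isColimit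
    (isColimitOfPreserves (coyoneda.obj (op X)) (isColimitFiniteSubproductsCocone F)) g
  obtain ⟨g, rfl⟩ : ∃ g'' : X ⟶ ∐ fun s : S => F s.1.as,
      g'' ≫ Sigma.desc (fun s => Sigma.ι F s.1.as) = g := ⟨g', hg⟩
  have hS : Sigma.desc (fun s : S => Sigma.ι F s.1.as) ≫
      ∑ i ∈ S.image Discrete.as, Sigma.π F i ≫ Sigma.ι F i =
        Sigma.desc (fun s : S => Sigma.ι F s.1.as) :=
    Sigma.hom_ext _ _ fun s => by
      rw [Sigma.ι_desc_assoc, Sigma.ι_desc,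
        Sigma.ι_comp_sum_π_ι F (Finset.mem_image_of_mem Discrete.as s.2)]
  refine ⟨S.image Discrete.as, ?_⟩
  simp only [Category.assoc, ← Preadditive.comp_sum, hS]

lemma Sigma.hom_induction {P : (X ⟶ ∐ F) → Prop} (zero : P 0)
    (add : ∀ a b, P a → P b → P (a + b)) (ι_comp : ∀ i (h : X ⟶ F i), P (h ≫ Sigma.ι F i))
    (g : X ⟶ ∐ F) : P g := by
  classical
  obtain ⟨S, hS⟩ := Sigma.exists_finset_eq_sum_π_ι F g
  rw [hS]
  exact Finset.sum_induction _ P add zero fun i _ => ι_comp i _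

end CoproductOfCompact

section DirectSum

variable {C : Type u} [Category.{v} C] [Preadditive C] {ι : Type w} [DecidableEq ι]
  (F : ι → C) [HasCoproduct F] (X : C)

noncomputable def Sigma.homOfDirectSum : (DirectSum ι fun i => X ⟶ F i) →+ (X ⟶ ∐ F) :=
  DirectSum.toAddMonoid fun i => Preadditive.rightComp X (Sigma.ι F i)

lemma Sigma.homOfDirectSum_of (i : ι) (h : X ⟶ F i) :
    Sigma.homOfDirectSum F X (DirectSum.of _ i h) = h ≫ Sigma.ι F i :=
  DirectSum.toAddMonoid_of _ _ _

lemma Sigma.homOfDirectSum_comp_π (z : DirectSum ι fun i => X ⟶ F i) (i : ι) :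
    Sigma.homOfDirectSum F X z ≫ Sigma.π F i = z i := by
  induction z using DirectSum.induction_on with
  | zero => simp
  | of j h =>
    rw [Sigma.homOfDirectSum_of, Category.assoc, Sigma.ι_π]
    by_cases hji : j = i
    · subst hji
      simp
    · simp [hji, DirectSum.of_eq_of_ne _ _ _ (Ne.symm hji)]
  | add z z' hz hz' => rw [map_add, Preadditive.add_comp, hz, hz', DirectSum.add_apply]

lemma Sigma.homOfDirectSum_injective : Function.Injective (Sigma.homOfDirectSum F X) :=
  fun z z' h => DFinsupp.ext fun i => by
    rw [← Sigma.homOfDirectSum_comp_π, ← Sigma.homOfDirectSum_comp_π, h]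

variable [HasFiniteCoproducts C] [HasColimitsOfShape (Finset (Discrete ι)) C]
  [PreservesFilteredColimitsOfSize.{w, w} (coyoneda.obj (op X))]

lemma Sigma.homOfDirectSum_surjective : Function.Surjective (Sigma.homOfDirectSum F X) :=
  Sigma.hom_induction F ⟨0, map_zero _⟩
    (fun _ _ ⟨z, hz⟩ ⟨z', hz'⟩ => ⟨z + z', by rw [map_add, hz, hz']⟩)
    (fun i h => ⟨DirectSum.of _ i h, Sigma.homOfDirectSum_of F X i h⟩)

noncomputable def Sigma.homAddEquivDirectSum : (DirectSum ι fun i => X ⟶ F i) ≃+ (X ⟶ ∐ F) :=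
  AddEquiv.ofBijective (Sigma.homOfDirectSum F X)
    ⟨Sigma.homOfDirectSum_injective F X, Sigma.homOfDirectSum_surjective F X⟩

lemma Sigma.homAddEquivDirectSum_symm_ι_comp (i : ι) (h : X ⟶ F i) :
    (Sigma.homAddEquivDirectSum F X).symm (h ≫ Sigma.ι F i) = DirectSum.of _ i h := by
  rw [AddEquiv.symm_apply_eq]
  exact (Sigma.homOfDirectSum_of F X i h).symm

end DirectSum

end CategoryTheory.Limits

noncomputable def AddMonoidHom.addEquivOfKerEq {A B C : Type*} [AddCommGroup A] [AddCommGroup B]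
    [AddCommGroup C] (f : A →+ B) (g : A →+ C) (hf : Function.Surjective f)
    (hg : Function.Surjective g) (h : f.ker = g.ker) : B ≃+ C :=
  (QuotientAddGroup.quotientKerEquivOfSurjective f hf).symm.trans
    ((QuotientAddGroup.quotientAddEquivOfEq h).trans
      (QuotientAddGroup.quotientKerEquivOfSurjective g hg))

lemma AddMonoidHom.addEquivOfKerEq_apply {A B C : Type*} [AddCommGroup A] [AddCommGroup B]
    [AddCommGroup C] (f : A →+ B) (g : A →+ C) (hf : Function.Surjective f)
    (hg : Function.Surjective g) (h : f.ker = g.ker) (a : A) :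
    AddMonoidHom.addEquivOfKerEq f g hf hg h (f a) = g a := by
  have hmk : (QuotientAddGroup.quotientKerEquivOfSurjective f hf).symm (f a) = a :=
    (AddEquiv.symm_apply_eq _).2 rfl
  simp only [addEquivOfKerEq, AddEquiv.trans_apply, hmk,
    QuotientAddGroup.quotientAddEquivOfEq_mk]
  rfl

lemma CategoryTheory.ObjectProperty.isSeparating_ofObj_of_exists_epi {α 𝒞 : Type*} [Category 𝒞]
    (G : α → 𝒞) [HasCoproducts.{w} 𝒞]
    (hgen : ∀ C : 𝒞, ∃ (ι : Type w) (f : ι → α) (p : (∐ fun i => G (f i)) ⟶ C), Epi p) :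
    (ObjectProperty.ofObj G).IsSeparating :=
  .mk_of_exists_epi fun C => by
    obtain ⟨ι, f, p, hp⟩ := hgen C
    exact ⟨ι, _, fun i => ⟨f i⟩, _, colimit.isColimit _, p, hp⟩

section RestrictedYoneda

variable {𝔞 : Type v} [SmallCategory 𝔞] [Preadditive 𝔞]
  {𝒞 : Type u} [Category.{v} 𝒞] [Preadditive 𝒞] (u : 𝔞 ⥤ 𝒞) [u.Additive]

noncomputable def restrictedYonedaHomApp {C D : 𝒞}
    (φ : (restrictedYoneda u).obj C ⟶ (restrictedYoneda u).obj D) (B : 𝔞) :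
    (u.obj B ⟶ C) →+ (u.obj B ⟶ D) :=
  (φ.hom.app (op B)).hom

lemma restrictedYonedaHomApp_map_comp {C D : 𝒞}
    (φ : (restrictedYoneda u).obj C ⟶ (restrictedYoneda u).obj D) {B A : 𝔞} (n : B ⟶ A)
    (g : u.obj A ⟶ C) :
    restrictedYonedaHomApp u φ B (u.map n ≫ g) = u.map n ≫ restrictedYonedaHomApp u φ A g :=
  ConcreteCategory.congr_hom (φ.hom.naturality n.op) g

lemma restrictedYoneda_faithful (hsep : (ObjectProperty.ofObj u.obj).IsSeparating) :
    (restrictedYoneda u).Faithful where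
  map_injective {C D} f₁ f₂ h := hsep f₁ f₂ fun _ hG g => by
    obtain ⟨A⟩ := hG
    exact congrArg (fun φ => φ.hom.app (op A) g) h

end RestrictedYoneda

section RestrictedYonedaColimits

variable {𝔞 : Type v} [SmallCategory 𝔞] [Preadditive 𝔞]
  {𝒞 : Type u} [Category.{v} 𝒞] (u : 𝔞 ⥤ 𝒞)

lemma restrictedYonedaHomApp_comp_sigmaDesc [Preadditive 𝒞] [HasColimits 𝒞] [u.Additive]
    [u.Full] [∀ A, PreservesFilteredColimitsOfSize.{v, v} (coyoneda.obj (op (u.obj A)))]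
    {C D : 𝒞} (φ : (restrictedYoneda u).obj C ⟶ (restrictedYoneda u).obj D)
    {ι : Type v} (f : ι → 𝔞) (r : (∐ fun i => u.obj (f i)) ⟶ C)
    {B : 𝔞} (g : u.obj B ⟶ ∐ fun i => u.obj (f i)) :
    g ≫ Sigma.desc (fun i =>
        restrictedYonedaHomApp u φ (f i) (Sigma.ι (fun i => u.obj (f i)) i ≫ r)) =
      restrictedYonedaHomApp u φ B (g ≫ r) := by
  induction g using Sigma.hom_induction with
  | zero => simp
  | add a b ha hb => rw [Preadditive.add_comp, ha, hb, Preadditive.add_comp, map_add]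
  | ι_comp i h =>
    obtain ⟨m, rfl⟩ := u.map_surjective h
    rw [Category.assoc, Sigma.ι_desc, Category.assoc, restrictedYonedaHomApp_map_comp]

variable [Abelian 𝒞] [HasColimits 𝒞] [u.Additive] [u.Full] [∀ A, Projective (u.obj A)]
  [∀ A, PreservesFilteredColimitsOfSize.{v, v} (coyoneda.obj (op (u.obj A)))]

lemma restrictedYoneda_full
    (hgen : ∀ C : 𝒞, ∃ (ι : Type v) (f : ι → 𝔞) (p : (∐ fun i => u.obj (f i)) ⟶ C), Epi p) :
    (restrictedYoneda u).Full where
  map_surjective {C D} φ := by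
    obtain ⟨ι, f, p, _⟩ := hgen C
    have hq (B : 𝔞) (g : u.obj B ⟶ ∐ fun i => u.obj (f i)) :=
      restrictedYonedaHomApp_comp_sigmaDesc u φ f p g
    set q := Sigma.desc fun i =>
      restrictedYonedaHomApp u φ (f i) (Sigma.ι (fun i => u.obj (f i)) i ≫ p)
    have hsep := ObjectProperty.isSeparating_ofObj_of_exists_epi u.obj hgen
    have hker : kernel.ι p ≫ q = 0 := hsep _ _ fun _ hG h => by
      obtain ⟨A⟩ := hG
      rw [← Category.assoc, hq, Category.assoc, kernel.condition, comp_zero, comp_zero, map_zero]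
    refine ⟨Abelian.epiDesc p q hker, ObjectProperty.hom_ext _ (NatTrans.ext (funext fun B =>
      AddCommGrpCat.ext fun g => ?_))⟩
    obtain ⟨g', rfl⟩ : ∃ g' : u.obj B.unop ⟶ _, g' ≫ p = g :=
      ⟨Projective.factorThru (P := u.obj B.unop) g p, Projective.factorThru_comp _ _⟩
    change (g' ≫ p) ≫ Abelian.epiDesc p q hker = restrictedYonedaHomApp u φ B.unop (g' ≫ p)
    rw [Category.assoc, Abelian.comp_epiDesc, hq]

end RestrictedYonedaColimits

section Presentation

variable {𝔞 : Type v} [SmallCategory 𝔞] [Preadditive 𝔞] {𝒞 : Type u} [Category.{v} 𝒞]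
  (u : 𝔞 ⥤ 𝒞) (M : ModuleCategory 𝔞)

noncomputable abbrev freeObj [HasColimits 𝒞] : 𝒞 :=
  ∐ fun x : Σ A : 𝔞, M.obj.obj (op A) => u.obj x.1

noncomputable def mapPreimageAddHom [Preadditive 𝒞] [u.Additive] [u.Full] [u.Faithful] {A : 𝔞}
    (x : M.obj.obj (op A)) (B : 𝔞) :
    (u.obj B ⟶ u.obj A) →+ M.obj.obj (op B) :=
  have := M.property
  AddMonoidHom.mk' (fun h => M.obj.map (u.preimage h).op x) fun h h' => by
    have : u.preimage (h + h') = u.preimage h + u.preimage h' := u.map_injective (by simp)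
    simp [this]

variable [Abelian 𝒞] [HasColimits 𝒞] [u.Additive] [u.Full] [u.Faithful]
  [∀ A, PreservesFilteredColimitsOfSize.{v, v} (coyoneda.obj (op (u.obj A)))]

-- Well defined because `Hom(u B, freeObj u M)` is a direct sum, `u B` being compact.
open Classical in
noncomputable def augmentation (B : 𝔞) : (u.obj B ⟶ freeObj u M) →+ M.obj.obj (op B) :=
  (DirectSum.toAddMonoid fun x : Σ A : 𝔞, M.obj.obj (op A) => mapPreimageAddHom u M x.2 B).comp
    (Sigma.homAddEquivDirectSum _ (u.obj B)).symm.toAddMonoidHom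

lemma augmentation_map_comp_ι (x : Σ A : 𝔞, M.obj.obj (op A)) {B : 𝔞} (m : B ⟶ x.1) :
    augmentation u M B (u.map m ≫ Sigma.ι (fun x : Σ A : 𝔞, M.obj.obj (op A) => u.obj x.1) x) =
      M.obj.map m.op x.2 := by
  simp [augmentation, Sigma.homAddEquivDirectSum_symm_ι_comp, mapPreimageAddHom]

lemma augmentation_map_comp {B B' : 𝔞} (n : B' ⟶ B) (g : u.obj B ⟶ freeObj u M) :
    augmentation u M B' (u.map n ≫ g) = M.obj.map n.op (augmentation u M B g) := by
  induction g using Sigma.hom_induction with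
  | zero => simp
  | add a b ha hb => rw [Preadditive.comp_add, map_add, map_add, ha, hb, map_add]
  | ι_comp x h =>
    obtain ⟨m, rfl⟩ := u.map_surjective h
    rw [← Category.assoc, ← u.map_comp, augmentation_map_comp_ι, augmentation_map_comp_ι, op_comp,
      Functor.map_comp]
    rfl

lemma augmentation_surjective (B : 𝔞) : Function.Surjective (augmentation u M B) := fun x => by
  refine ⟨u.map (𝟙 B) ≫ Sigma.ι (fun x : Σ A : 𝔞, M.obj.obj (op A) => u.obj x.1) ⟨B, x⟩, ?_⟩
  refine (augmentation_map_comp_ι u M ⟨B, x⟩ (𝟙 B)).trans ?_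
  rw [op_id, M.obj.map_id]
  rfl

noncomputable abbrev relationObj : 𝒞 :=
  ∐ fun y : Σ A : 𝔞, (augmentation u M A).ker => u.obj y.1

noncomputable def relations : relationObj u M ⟶ freeObj u M :=
  Sigma.desc fun y => y.2.1

lemma augmentation_comp_relations {B : 𝔞} (g : u.obj B ⟶ relationObj u M) :
    augmentation u M B (g ≫ relations u M) = 0 := by
  induction g using Sigma.hom_induction with
  | zero => simp
  | add a b ha hb => rw [Preadditive.add_comp, map_add, ha, hb, add_zero]
  | ι_comp y h =>
    obtain ⟨m, rfl⟩ := u.map_surjective h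
    rw [relations, Category.assoc, Sigma.ι_desc, augmentation_map_comp, y.2.2, map_zero]

noncomputable abbrev presentedObj : 𝒞 :=
  cokernel (relations u M)

variable [∀ A, Projective (u.obj A)]

lemma comp_cokernel_π_relations_eq_zero_iff {B : 𝔞} (g : u.obj B ⟶ freeObj u M) :
    g ≫ cokernel.π (relations u M) = 0 ↔ augmentation u M B g = 0 := by
  refine ⟨fun hg => ?_, fun hg => ?_⟩
  · rw [← (ShortComplex.exact_cokernel (relations u M)).liftFromProjective_comp g hg]
    exact augmentation_comp_relations u M _
  · have hrel : g = Sigma.ι _ ⟨B, g, hg⟩ ≫ relations u M := by rw [relations, Sigma.ι_desc]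
    rw [hrel, Category.assoc, cokernel.condition, comp_zero]

noncomputable def presentedObjHomAddEquiv (B : 𝔞) :
    (u.obj B ⟶ presentedObj u M) ≃+ M.obj.obj (op B) :=
  AddMonoidHom.addEquivOfKerEq (Preadditive.rightComp _ (cokernel.π (relations u M)))
    (augmentation u M B)
    (fun h => ⟨Projective.factorThru h _, Projective.factorThru_comp _ _⟩)
    (augmentation_surjective u M B)
    (AddSubgroup.ext fun g => comp_cokernel_π_relations_eq_zero_iff u M g)

lemma presentedObjHomAddEquiv_comp_π {B : 𝔞} (g : u.obj B ⟶ freeObj u M) :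
    presentedObjHomAddEquiv u M B (g ≫ cokernel.π (relations u M)) = augmentation u M B g :=
  AddMonoidHom.addEquivOfKerEq_apply _ _ _ _ _ g

noncomputable def restrictedYonedaObjPresentedObjIso :
    (restrictedYoneda u).obj (presentedObj u M) ≅ M :=
  ObjectProperty.isoMk _ <| NatIso.ofComponents
    (fun B => (presentedObjHomAddEquiv u M B.unop).toAddCommGrpIso) fun {B B'} n => by
      ext h
      obtain ⟨g, rfl⟩ : ∃ g : u.obj B.unop ⟶ freeObj u M, g ≫ cokernel.π (relations u M) = h :=
        ⟨Projective.factorThru (P := u.obj B.unop) h _, Projective.factorThru_comp _ _⟩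
      change presentedObjHomAddEquiv u M B'.unop (u.map n.unop ≫ g ≫ cokernel.π _) =
        M.obj.map n (presentedObjHomAddEquiv u M B.unop (g ≫ cokernel.π _))
      rw [← Category.assoc, presentedObjHomAddEquiv_comp_π, presentedObjHomAddEquiv_comp_π,
        augmentation_map_comp]
      rfl

end Presentation

lemma restrictedYoneda_essSurj {𝔞 : Type v} [SmallCategory 𝔞] [Preadditive 𝔞]
    {𝒞 : Type u} [Category.{v} 𝒞] [Abelian 𝒞] [HasColimits 𝒞] (u : 𝔞 ⥤ 𝒞) [u.Additive]
    [u.Full] [u.Faithful] [∀ A, Projective (u.obj A)]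
    [∀ A, PreservesFilteredColimitsOfSize.{v, v} (coyoneda.obj (op (u.obj A)))] :
    (restrictedYoneda u).EssSurj :=
  ⟨fun M => ⟨presentedObj u M, ⟨restrictedYonedaObjPresentedObjIso u M⟩⟩⟩

theorem statement0_general {𝔞 : Type v} [SmallCategory 𝔞] [Preadditive 𝔞]
    {𝒞 : Type u} [Category.{v} 𝒞] [Abelian 𝒞] [HasColimits 𝒞]
    (u : 𝔞 ⥤ 𝒞) [u.Additive]
    (hfull : u.Full) (hfaithful : u.Faithful)
    (hproj : ∀ A : 𝔞, Projective (u.obj A))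
    (hfp : ∀ A : 𝔞, PreservesFilteredColimitsOfSize.{v, v} (coyoneda.obj (op (u.obj A))))
    (hgen : ∀ C : 𝒞, ∃ (ι : Type v) (f : ι → 𝔞) (p : (∐ fun i => u.obj (f i)) ⟶ C), Epi p) :
    (restrictedYoneda u).IsEquivalence :=
  { faithful :=
      restrictedYoneda_faithful u (ObjectProperty.isSeparating_ofObj_of_exists_epi u.obj hgen)
    full := restrictedYoneda_full u hgen
    essSurj := restrictedYoneda_essSurj u }

theorem statement0 {𝔞 : Type v} [SmallCategory 𝔞] [Preadditive 𝔞]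
    {𝒞 : Type u} [Category.{v} 𝒞] [Abelian 𝒞] [HasColimits 𝒞] [AB5 𝒞] [HasSeparator 𝒞]
    (u : 𝔞 ⥤ 𝒞) [u.Additive]
    (hfull : u.Full) (hfaithful : u.Faithful)
    (hproj : ∀ A : 𝔞, Projective (u.obj A))
    (hfp : ∀ A : 𝔞, PreservesFilteredColimitsOfSize.{v, v} (coyoneda.obj (op (u.obj A))))
    (hgen : ∀ C : 𝒞, ∃ (ι : Type v) (f : ι → 𝔞) (p : (∐ fun i => u.obj (f i)) ⟶ C), Epi p) :
    (restrictedYoneda u).IsEquivalence :=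
  statement0_general u hfull hfaithful hproj hfp hgen
end

section
/- Let 𝔞 be a small preadditive category, 𝒞 a Grothendieck category, and u : 𝔞 → 𝒞 an additive functor. If the restricted Yoneda functor 𝒞 → Mod(𝔞), sending C to the module A ↦ Hom_𝒞(u(A), C), is an equivalence of categories, then u is fully faithful and the objects u(A), for A ∈ 𝔞, are projective, finitely presented, and form a generating family in 𝒞. -/
/-!
Statement 1: Let 𝔞 be a small preadditive category, 𝒞 a Grothendieck category, and
`u : 𝔞 ⥤ 𝒞` an additive functor.  If the restricted Yoneda functor `𝒞 ⥤ Mod 𝔞`,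
`C ↦ (A ↦ Hom(u A, C))`, is an equivalence, then `u` is fully faithful and the
objects `u A` are projective, finitely presented and form a generating family in 𝒞.
-/

open CategoryTheory Limits Opposite

universe v u

/-!
Since the restricted Yoneda functor `R` is an equivalence, everything about the objects `u A`
can be read off in `Mod 𝔞`, where colimits, and hence epimorphisms, are computed pointwise
because additive functors are closed under colimits in `𝔞ᵒᵖ ⥤ Ab`. The functor `Hom(u A, -)`
is `R` followed by evaluation at `A`, so it preserves epimorphisms and filtered colimits; and
`R` sends the sum of all maps `u A ⟶ C` to a pointwise surjection. For full faithfulness,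
the map `𝔞(-, B) ⟶ R (u B)` classified by `𝟙 (u B)` is a universal arrow by the additive
Yoneda lemma, hence an isomorphism since `R` is an equivalence, and its components are the
maps `u.map`.
-/

namespace ModuleCategory

variable {𝔞 : Type v} [SmallCategory 𝔞] [Preadditive 𝔞]

lemma additive_of_isColimit {J : Type*} [Category* J]
    [HasColimitsOfShape J AddCommGrpCat.{v}] {K : J ⥤ 𝔞ᵒᵖ ⥤ AddCommGrpCat.{v}}
    (hK : ∀ j, (K.obj j).Additive) {c : Cocone K} (hc : IsColimit c) : c.pt.Additive where
  map_add {X Y f g} := (isColimitOfPreserves ((evaluation _ _).obj X) hc).hom_ext fun j => by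
    simp [← NatTrans.naturality, (hK j).map_add]

instance isClosedUnderColimitsOfShape_additive {J : Type*} [Category* J]
    [HasColimitsOfShape J AddCommGrpCat.{v}] :
    ObjectProperty.IsClosedUnderColimitsOfShape
      (fun F : 𝔞ᵒᵖ ⥤ AddCommGrpCat.{v} => F.Additive) J where
  colimitsOfShape_le := by
    rintro F ⟨h⟩
    exact additive_of_isColimit h.prop_diag_obj h.isColimit

lemma epi_of_surjective_app {M N : ModuleCategory 𝔞} (f : M ⟶ N)
    (hf : ∀ A, Function.Surjective (f.hom.app A)) : Epi f :=
  have (A : 𝔞ᵒᵖ) : Epi (f.hom.app A) := (AddCommGrpCat.epi_iff_surjective _).2 (hf A)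
  have : Epi f.hom := NatTrans.epi_of_epi_app _
  (ObjectProperty.ι _).epi_of_epi_map this

variable (𝔞) in
noncomputable def yoneda : 𝔞 ⥤ ModuleCategory 𝔞 :=
  ObjectProperty.lift _ preadditiveYoneda fun _ => inferInstance

noncomputable def yonedaEquiv (A : 𝔞) (M : ModuleCategory 𝔞) :
    ((yoneda 𝔞).obj A ⟶ M) ≃ M.obj.obj (op A) :=
  haveI := M.property
  { toFun η := η.hom.app (op A) (𝟙 A)
    invFun m := ObjectProperty.homMk
      { app A' := AddCommGrpCat.ofHom <|
          AddMonoidHom.mk' (fun (g : A'.unop ⟶ A) => M.obj.map g.op m)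
            fun (g h : A'.unop ⟶ A) => by
              change M.obj.map (g + h).op m = _
              simp [op_add, M.obj.map_add]
        naturality A' A'' h := by
          ext (g : A'.unop ⟶ A)
          change M.obj.map (h.unop ≫ g).op m = M.obj.map h (M.obj.map g.op m)
          simp }
    left_inv η := by
      ext A' (g : A'.unop ⟶ A)
      change M.obj.map g.op (η.hom.app (op A) (𝟙 A)) = η.hom.app A' g
      have h : η.hom.app A' (g ≫ 𝟙 A) = M.obj.map g.op (η.hom.app (op A) (𝟙 A)) :=
        ConcreteCategory.congr_hom (η.hom.naturality g.op) (𝟙 A)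
      rw [Category.comp_id] at h
      exact h.symm
    right_inv m := by
      change M.obj.map (𝟙 A).op m = m
      simp }

lemma yonedaEquiv_symm_hom_app {A : 𝔞} {M : ModuleCategory 𝔞} (m : M.obj.obj (op A))
    {A' : 𝔞} (g : A' ⟶ A) :
    ((yonedaEquiv A M).symm m).hom.app (op A') g = M.obj.map g.op m := rfl

end ModuleCategory

lemma CategoryTheory.Adjunction.isIso_of_bijective_comp_map {C D : Type*} [Category* C]
    [Category* D] {L : D ⥤ C} {R : C ⥤ D} (adj : L ⊣ R) [IsIso adj.unit] {M : D} {c : C}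
    (θ : M ⟶ R.obj c) (hθ : ∀ X, Function.Bijective fun f : c ⟶ X => θ ≫ R.map f) :
    IsIso θ := by
  obtain ⟨θ', rfl⟩ := (adj.homEquiv M c).surjective θ
  have : IsIso θ' := isIso_of_coyoneda_map_bijective θ' fun X => by
    convert (adj.homEquiv M X).symm.bijective.comp (hθ X) using 1
    ext f
    rw [Function.comp_apply, Equiv.eq_symm_apply, adj.homEquiv_naturality_right]
  rw [adj.homEquiv_unit]
  infer_instance

section

variable {𝔞 : Type v} [SmallCategory 𝔞] [Preadditive 𝔞] {𝒞 : Type u} [Category.{v} 𝒞]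
  [Preadditive 𝒞] (u : 𝔞 ⥤ 𝒞) [u.Additive]

noncomputable def restrictedYonedaEvaluationIso (A : 𝔞) :
    restrictedYoneda u ⋙ ObjectProperty.ι _ ⋙ (evaluation 𝔞ᵒᵖ AddCommGrpCat.{v}).obj (op A) ⋙
      forget AddCommGrpCat ≅ coyoneda.obj (op (u.obj A)) :=
  NatIso.ofComponents fun _ => Iso.refl _

noncomputable def yonedaToRestrictedYoneda (B : 𝔞) :
    (ModuleCategory.yoneda 𝔞).obj B ⟶ (restrictedYoneda u).obj (u.obj B) :=
  (ModuleCategory.yonedaEquiv _ _).symm (𝟙 (u.obj B))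

lemma yonedaToRestrictedYoneda_comp_map {B : 𝔞} {X : 𝒞} (k : u.obj B ⟶ X) :
    yonedaToRestrictedYoneda u B ≫ (restrictedYoneda u).map k =
      (ModuleCategory.yonedaEquiv _ _).symm k := by
  ext A' (g : A'.unop ⟶ B)
  change (u.map g ≫ 𝟙 _) ≫ k = u.map g ≫ k
  rw [Category.comp_id]

lemma yonedaToRestrictedYoneda_hom_app {A B : 𝔞} (g : A ⟶ B) :
    (yonedaToRestrictedYoneda u B).hom.app (op A) g = u.map g :=
  (ModuleCategory.yonedaEquiv_symm_hom_app _ g).trans (Category.comp_id _)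

variable [(restrictedYoneda u).IsEquivalence]

instance isIso_yonedaToRestrictedYoneda (B : 𝔞) : IsIso (yonedaToRestrictedYoneda u B) :=
  (restrictedYoneda u).asEquivalence.symm.toAdjunction.isIso_of_bijective_comp_map
    (yonedaToRestrictedYoneda u B) fun X => by
    change Function.Bijective fun k =>
      yonedaToRestrictedYoneda u B ≫ (restrictedYoneda u).map k
    simp only [yonedaToRestrictedYoneda_comp_map]
    exact (ModuleCategory.yonedaEquiv B ((restrictedYoneda u).obj X)).symm.bijective

lemma map_bijective_of_isEquivalence_restrictedYoneda (A B : 𝔞) :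
    Function.Bijective (u.map : (A ⟶ B) → (u.obj A ⟶ u.obj B)) := by
  have h : (u.map : (A ⟶ B) → (u.obj A ⟶ u.obj B)) =
      (yonedaToRestrictedYoneda u B).hom.app (op A) :=
    funext fun g => (yonedaToRestrictedYoneda_hom_app u g).symm
  rw [h]
  exact ConcreteCategory.bijective_of_isIso _

lemma projective_of_isEquivalence_restrictedYoneda (A : 𝔞) : Projective (u.obj A) :=
  (Projective.projective_iff_preservesEpimorphisms_coyoneda_obj _).2
    (.of_iso (restrictedYonedaEvaluationIso u A))

lemma preservesFilteredColimits_coyoneda_of_isEquivalence_restrictedYoneda (A : 𝔞) :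
    PreservesFilteredColimitsOfSize.{v, v} (coyoneda.obj (op (u.obj A))) :=
  ⟨fun _ _ _ => preservesColimitsOfShape_of_natIso (restrictedYonedaEvaluationIso u A)⟩

lemma epi_sigmaDesc_of_isEquivalence_restrictedYoneda (C : 𝒞)
    [HasCoproduct fun i : Σ A : 𝔞, u.obj A ⟶ C => u.obj i.1] :
    Epi (Sigma.desc fun i : Σ A : 𝔞, u.obj A ⟶ C => i.2) := by
  refine (restrictedYoneda u).epi_of_epi_map
    (ModuleCategory.epi_of_surjective_app _ fun A k => ?_)
  exact ⟨Sigma.ι (fun i : Σ A : 𝔞, u.obj A ⟶ C => u.obj i.1) ⟨A.unop, k⟩, Sigma.ι_desc _ _⟩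

end

theorem statement1_general {𝔞 : Type v} [SmallCategory 𝔞] [Preadditive 𝔞]
    {𝒞 : Type u} [Category.{v} 𝒞] [Abelian 𝒞] [HasColimits 𝒞]
    (u : 𝔞 ⥤ 𝒞) [u.Additive]
    (heq : (restrictedYoneda u).IsEquivalence) :
    u.Full ∧ u.Faithful ∧
    (∀ A : 𝔞, Projective (u.obj A)) ∧
    (∀ A : 𝔞, PreservesFilteredColimitsOfSize.{v, v} (coyoneda.obj (op (u.obj A)))) ∧
    (∀ C : 𝒞, ∃ (ι : Type v) (f : ι → 𝔞) (p : (∐ fun i => u.obj (f i)) ⟶ C), Epi p) :=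
  ⟨⟨fun {A B} => (map_bijective_of_isEquivalence_restrictedYoneda u A B).2⟩,
    ⟨fun {A B} => (map_bijective_of_isEquivalence_restrictedYoneda u A B).1⟩,
    projective_of_isEquivalence_restrictedYoneda u,
    preservesFilteredColimits_coyoneda_of_isEquivalence_restrictedYoneda u,
    fun C => ⟨_, _, _, epi_sigmaDesc_of_isEquivalence_restrictedYoneda u C⟩⟩

theorem statement1 {𝔞 : Type v} [SmallCategory 𝔞] [Preadditive 𝔞]
    {𝒞 : Type u} [Category.{v} 𝒞] [Abelian 𝒞] [HasColimits 𝒞] [AB5 𝒞] [HasSeparator 𝒞]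
    (u : 𝔞 ⥤ 𝒞) [u.Additive]
    (heq : (restrictedYoneda u).IsEquivalence) :
    u.Full ∧ u.Faithful ∧
    (∀ A : 𝔞, Projective (u.obj A)) ∧
    (∀ A : 𝔞, PreservesFilteredColimitsOfSize.{v, v} (coyoneda.obj (op (u.obj A)))) ∧
    (∀ C : 𝒞, ∃ (ι : Type v) (f : ι → 𝔞) (p : (∐ fun i => u.obj (f i)) ⟶ C), Epi p) :=
  statement1_general u heq
end

section
/- Let p : ℬ → 𝒜 be a morphism of R-linear fibered categories on a site (𝒰, 𝒯) which satisfies (G) and (F) and locally reflects isomorphisms. If 𝒜 is algebroid, then so is ℬ. -/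
open CategoryTheory Limits

universe w v₂ u₂ v₁ u₁ u₀

/-- A covering system `𝒯` on a category `𝒰`: for each object `U` a collection of
coverings (families of morphisms into `U`, encoded as presieves), containing the
identity families and stable under composition (transitivity). -/
structure CoveringSystem (𝒰 : Type u₁) [Category.{v₁} 𝒰] where
  covers : ∀ U : 𝒰, Set (Presieve U)
  id_mem : ∀ U : 𝒰, Presieve.singleton (𝟙 U) ∈ covers U
  bind_mem : ∀ ⦃U : 𝒰⦄ (S : Presieve U), S ∈ covers U →
    ∀ (T : ∀ ⦃V : 𝒰⦄ ⦃f : V ⟶ U⦄, S f → Presieve V),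
      (∀ ⦃V : 𝒰⦄ ⦃f : V ⟶ U⦄ (h : S f), T h ∈ covers V) → S.bind T ∈ covers U

/-- An `R`-linear fibered category on a base category `𝒰`, presented as a pseudofunctor:
`R`-linear categories `Fib U`, `R`-linear restriction functors `res i : Fib U ⥤ Fib V`
for `i : V ⟶ U`, and natural isomorphisms `τ` satisfying the cocycle condition. -/
structure LinearFibered (R : Type u₀) [CommRing R] (𝒰 : Type u₁) [Category.{v₁} 𝒰] where
  Fib : 𝒰 → Type u₂
  [cat : ∀ U, Category.{v₂} (Fib U)]
  [preadd : ∀ U, Preadditive (Fib U)]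
  [lin : ∀ U, CategoryTheory.Linear R (Fib U)]
  res : ∀ {V U : 𝒰}, (V ⟶ U) → (Fib U ⥤ Fib V)
  [resAdditive : ∀ {V U : 𝒰} (i : V ⟶ U), (res i).Additive]
  [resLinear : ∀ {V U : 𝒰} (i : V ⟶ U), (res i).Linear R]
  τ : ∀ {W V U : 𝒰} (j : W ⟶ V) (i : V ⟶ U), res (j ≫ i) ≅ res i ⋙ res j
  cocycle : ∀ {Z W V U : 𝒰} (k : Z ⟶ W) (j : W ⟶ V) (i : V ⟶ U),
    (τ (k ≫ j) i).hom ≫ Functor.whiskerLeft (res i) (τ k j).hom =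
      eqToHom (by rw [Category.assoc]) ≫ (τ k (j ≫ i)).hom ≫
        Functor.whiskerRight (τ j i).hom (res k)

attribute [instance] LinearFibered.cat LinearFibered.preadd LinearFibered.lin
  LinearFibered.resAdditive LinearFibered.resLinear

variable {R : Type u₀} [CommRing R] {𝒰 : Type u₁} [Category.{v₁} 𝒰]

/-- A morphism `p : ℬ ⟶ 𝒜` of `R`-linear fibered categories: `R`-linear functors
`p.app U : ℬ(U) ⥤ 𝒜(U)` together with natural isomorphisms `p.comm i` commuting with
the restriction functors, compatibly with the `τ`'s. -/
structure FiberedMor (ℬ 𝒜 : LinearFibered.{v₂, u₂} R 𝒰) where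
  app : ∀ U : 𝒰, ℬ.Fib U ⥤ 𝒜.Fib U
  [appAdditive : ∀ U : 𝒰, (app U).Additive]
  [appLinear : ∀ U : 𝒰, (app U).Linear R]
  comm : ∀ {V U : 𝒰} (i : V ⟶ U), ℬ.res i ⋙ app V ≅ app U ⋙ 𝒜.res i
  comm_comp : ∀ {W V U : 𝒰} (j : W ⟶ V) (i : V ⟶ U),
    Functor.whiskerRight (ℬ.τ j i).hom (app W) ≫ Functor.whiskerLeft (ℬ.res i) (comm j).hom ≫
        Functor.whiskerRight (comm i).hom (𝒜.res j) =
      (comm (j ≫ i)).hom ≫ Functor.whiskerLeft (app U) (𝒜.τ j i).hom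

attribute [instance] FiberedMor.appAdditive FiberedMor.appLinear

namespace FiberedMor

variable {ℬ 𝒜 : LinearFibered.{v₂, u₂} R 𝒰} (p : FiberedMor ℬ 𝒜)

/-- The canonical identification `p(B|_V|_W) ≅ p(B)|_V|_W`. -/
def ident {U V W : 𝒰} (i : V ⟶ U) (g : W ⟶ V) (B : ℬ.Fib U) :
    (p.app W).obj ((ℬ.res g).obj ((ℬ.res i).obj B)) ≅
      (𝒜.res g).obj ((𝒜.res i).obj ((p.app U).obj B)) :=
  (p.comm g).app ((ℬ.res i).obj B) ≪≫ (𝒜.res g).mapIso ((p.comm i).app B)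

variable (𝒯 : CoveringSystem 𝒰)

/-- Condition (G): `p` is locally surjective on objects. -/
def SatisfiesG : Prop :=
  ∀ (U : 𝒰) (A : 𝒜.Fib U), ∃ S ∈ 𝒯.covers U, ∀ ⦃V : 𝒰⦄ ⦃f : V ⟶ U⦄, S f →
    ∃ B : ℬ.Fib V, Nonempty ((p.app V).obj B ≅ (𝒜.res f).obj A)

/-- Condition (F): for `B, B' ∈ ℬ(U)` and a morphism `a : p(B)|_V ⟶ p(B')|_V` in `𝒜(V)`,
locally on a covering of `V` the morphism `a` comes from `ℬ` (under the canonical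
identifications). -/
def SatisfiesF : Prop :=
  ∀ ⦃U V : 𝒰⦄ (B B' : ℬ.Fib U) (i : V ⟶ U)
    (a : (𝒜.res i).obj ((p.app U).obj B) ⟶ (𝒜.res i).obj ((p.app U).obj B')),
    ∃ S ∈ 𝒯.covers V, ∀ ⦃W : 𝒰⦄ ⦃g : W ⟶ V⦄, S g →
      ∃ b : (ℬ.res g).obj ((ℬ.res i).obj B) ⟶ (ℬ.res g).obj ((ℬ.res i).obj B'),
        (p.app W).map b ≫ (p.ident i g B').hom = (p.ident i g B).hom ≫ (𝒜.res g).map a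

/-- Condition (FF): for `B, B' ∈ ℬ(U)` and `b : B|_V ⟶ B'|_V` with `p(b) = 0`, the
morphism `b` vanishes locally on a covering of `V`. -/
def SatisfiesFF : Prop :=
  ∀ ⦃U V : 𝒰⦄ (B B' : ℬ.Fib U) (i : V ⟶ U)
    (b : (ℬ.res i).obj B ⟶ (ℬ.res i).obj B'), (p.app V).map b = 0 →
    ∃ S ∈ 𝒯.covers V, ∀ ⦃W : 𝒰⦄ ⦃g : W ⟶ V⦄, S g → (ℬ.res g).map b = 0

/-- `p` locally reflects isomorphisms. -/
def LocallyReflectsIsos : Prop :=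
  ∀ ⦃U : 𝒰⦄ ⦃B B' : ℬ.Fib U⦄ (b : B ⟶ B'), IsIso ((p.app U).map b) →
    ∃ S ∈ 𝒯.covers U, ∀ ⦃V : 𝒰⦄ ⦃f : V ⟶ U⦄, S f → IsIso ((ℬ.res f).map b)

end FiberedMor

/-- An `R`-linear fibered category `𝒜` on a site `(𝒰, 𝒯)` is algebroid if (1) every `U`
admits a covering with nonempty fibers and (2) any two objects of a fiber are locally
isomorphic. -/
def LinearFibered.IsAlgebroid (𝒜 : LinearFibered.{v₂, u₂} R 𝒰)
    (𝒯 : CoveringSystem 𝒰) : Prop :=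
  (∀ U : 𝒰, ∃ S ∈ 𝒯.covers U, ∀ ⦃V : 𝒰⦄ ⦃f : V ⟶ U⦄, S f → Nonempty (𝒜.Fib V)) ∧
  (∀ (U : 𝒰) (A A' : 𝒜.Fib U), ∃ S ∈ 𝒯.covers U, ∀ ⦃V : 𝒰⦄ ⦃f : V ⟶ U⦄, S f →
    Nonempty ((𝒜.res f).obj A ≅ (𝒜.res f).obj A'))

/-!
Locally on a covering of `U`, (G) gives objects of `ℬ` over the nonempty fibers of `𝒜`. Given
`B, B' ∈ ℬ(U)`, cover `U` so that `p(B) ≅ p(B')` there; by (F) this isomorphism comes locally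
from morphisms `b` of `ℬ`, whose images are isomorphisms, so refining once more each `b` becomes
an isomorphism. Transitivity of coverings composes the three refinements.
-/

namespace CoveringSystem

variable (𝒯 : CoveringSystem 𝒰)

/-- Conditions (G), (F), local reflection of isomorphisms and `IsAlgebroid` unfold to this form. -/
def Locally (U : 𝒰) (P : ∀ ⦃V : 𝒰⦄, (V ⟶ U) → Prop) : Prop :=
  ∃ S ∈ 𝒯.covers U, ∀ ⦃V : 𝒰⦄ ⦃f : V ⟶ U⦄, S f → P f

variable {𝒯}

theorem Locally.mono {U : 𝒰} {P Q : ∀ ⦃V : 𝒰⦄, (V ⟶ U) → Prop} (hP : 𝒯.Locally U P)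
    (hPQ : ∀ ⦃V : 𝒰⦄ (f : V ⟶ U), P f → Q f) : 𝒯.Locally U Q := by
  obtain ⟨S, hS, hSP⟩ := hP
  exact ⟨S, hS, fun _ f hf => hPQ f (hSP hf)⟩

theorem Locally.trans {U : 𝒰} {P Q : ∀ ⦃V : 𝒰⦄, (V ⟶ U) → Prop} (hP : 𝒯.Locally U P)
    (hPQ : ∀ ⦃V : 𝒰⦄ (f : V ⟶ U), P f → 𝒯.Locally V fun _ g => Q (g ≫ f)) :
    𝒯.Locally U Q := by
  obtain ⟨S, hS, hSP⟩ := hP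
  choose T hT hTQ using fun (V : 𝒰) (f : V ⟶ U) (hf : S f) => hPQ f (hSP hf)
  refine ⟨S.bind fun V f hf => T V f hf, 𝒯.bind_mem S hS _ fun V f hf => hT V f hf, ?_⟩
  rintro _ _ ⟨V, g, f, hf, hg, rfl⟩
  exact hTQ V f hf hg

end CoveringSystem

theorem LinearFibered.nonempty_iso_res_comp (ℬ : LinearFibered.{v₂, u₂} R 𝒰) {W V U : 𝒰}
    (g : W ⟶ V) (f : V ⟶ U) {B B' : ℬ.Fib U}
    (e : (ℬ.res g).obj ((ℬ.res f).obj B) ≅ (ℬ.res g).obj ((ℬ.res f).obj B')) :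
    Nonempty ((ℬ.res (g ≫ f)).obj B ≅ (ℬ.res (g ≫ f)).obj B') :=
  ⟨(ℬ.τ g f).app B ≪≫ e ≪≫ ((ℬ.τ g f).app B').symm⟩

namespace FiberedMor

variable {ℬ 𝒜 : LinearFibered.{v₂, u₂} R 𝒰} (p : FiberedMor ℬ 𝒜) {𝒯 : CoveringSystem 𝒰}

theorem locally_nonempty_fib (hG : p.SatisfiesG 𝒯) {U : 𝒰}
    (h𝒜 : 𝒯.Locally U fun V _ => Nonempty (𝒜.Fib V)) :
    𝒯.Locally U fun V _ => Nonempty (ℬ.Fib V) :=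
  h𝒜.trans fun V _ ⟨A⟩ => CoveringSystem.Locally.mono (hG V A) fun _ _ ⟨B, _⟩ => ⟨B⟩

theorem isIso_map_of_comp_ident_eq {U V W : 𝒰} {i : V ⟶ U} {g : W ⟶ V} {B B' : ℬ.Fib U}
    {a : (𝒜.res i).obj ((p.app U).obj B) ⟶ (𝒜.res i).obj ((p.app U).obj B')} [IsIso a]
    {b : (ℬ.res g).obj ((ℬ.res i).obj B) ⟶ (ℬ.res g).obj ((ℬ.res i).obj B')}
    (hb : (p.app W).map b ≫ (p.ident i g B').hom = (p.ident i g B).hom ≫ (𝒜.res g).map a) :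
    IsIso ((p.app W).map b) := by
  have : IsIso ((p.app W).map b ≫ (p.ident i g B').hom) := by
    rw [hb]
    infer_instance
  exact IsIso.of_isIso_comp_right _ (p.ident i g B').hom

theorem locally_iso_of_iso (hF : p.SatisfiesF 𝒯) (hloc : p.LocallyReflectsIsos 𝒯)
    {U V : 𝒰} (i : V ⟶ U) {B B' : ℬ.Fib U}
    (a : (𝒜.res i).obj ((p.app U).obj B) ≅ (𝒜.res i).obj ((p.app U).obj B')) :
    𝒯.Locally V fun _ g => Nonempty ((ℬ.res g).obj ((ℬ.res i).obj B) ≅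
      (ℬ.res g).obj ((ℬ.res i).obj B')) := by
  refine CoveringSystem.Locally.trans (hF B B' i a.hom) fun W g ⟨b, hb⟩ => ?_
  have : IsIso ((p.app W).map b) := p.isIso_map_of_comp_ident_eq hb
  exact CoveringSystem.Locally.mono (hloc b this) fun _ h _ =>
    ℬ.nonempty_iso_res_comp h g (asIso ((ℬ.res h).map b))

end FiberedMor

theorem statement5 {R : Type u₀} [CommRing R] {𝒰 : Type u₁} [Category.{v₁} 𝒰]
    (𝒯 : CoveringSystem 𝒰) {ℬ 𝒜 : LinearFibered.{v₂, u₂} R 𝒰} (p : FiberedMor ℬ 𝒜)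
    (hG : p.SatisfiesG 𝒯) (hF : p.SatisfiesF 𝒯) (hloc : p.LocallyReflectsIsos 𝒯)
    (h𝒜 : 𝒜.IsAlgebroid 𝒯) :
    ℬ.IsAlgebroid 𝒯 := by
  refine ⟨fun U => p.locally_nonempty_fib hG (h𝒜.1 U), fun U B B' => ?_⟩
  refine CoveringSystem.Locally.trans (h𝒜.2 U ((p.app U).obj B) ((p.app U).obj B'))
    fun _ f ⟨a⟩ => ?_
  exact (p.locally_iso_of_iso hF hloc f a).mono fun _ g ⟨e⟩ => ℬ.nonempty_iso_res_comp g f e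
end

section
/- For all open subsets U and V of a topological space X there are natural isomorphisms of endofunctors of the category Sh(X, R) of sheaves of R-modules: q_U ∘ q_V ≅ q_{U∩V} ≅ q_V ∘ q_U. In particular the localization endofunctors q_U and q_V commute; this expresses that the localizing Serre subcategories Z(U) = Ker(j_U^*) and Z(V) = Ker(j_V^*) of Sh(X, R) are compatible with Z(U) ∗ Z(V) = Z(U ∩ V). -/
/-!
Restricting a sheaf to an open `U` and pushing it forward again is precomposition with the
functor `W ↦ W ⊓ U` on the opens of `X`, because the pullback along an open embedding is the
naive restriction. Precomposition functors compose contravariantly, and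
`(W ⊓ U) ⊓ V = W ⊓ (U ⊓ V)`.
-/

open CategoryTheory TopologicalSpace

universe u

/-- The localization endofunctor `q_U = j_{U*} ∘ j_U^*` of the category of sheaves of
`R`-modules on `X` associated to an open subset `U ⊆ X`; concretely
`(q_U F)(W) = F(W ∩ U)`. -/
noncomputable def qFunctor (R : Type u) [CommRing R] (X : TopCat.{u}) (U : Opens X) :
    X.Sheaf (ModuleCat.{u} R) ⥤ X.Sheaf (ModuleCat.{u} R) :=
  TopCat.Sheaf.pullback (ModuleCat.{u} R) U.inclusion' ⋙
    TopCat.Sheaf.pushforward (ModuleCat.{u} R) U.inclusion'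

namespace TopologicalSpace.Opens

variable {X : TopCat.{u}}

def infFunctor (U : Opens X) : Opens X ⥤ Opens X :=
  Opens.map U.inclusion' ⋙ U.isOpenEmbedding.functor

instance (U : Opens X) :
    (infFunctor U).IsContinuous (Opens.grothendieckTopology X) (Opens.grothendieckTopology X) :=
  have := U.isOpenEmbedding.functor_isContinuous
  Functor.isContinuous_comp _ _ _ (Opens.grothendieckTopology _) _

@[simp]
lemma infFunctor_obj (U W : Opens X) : (infFunctor U).obj W = W ⊓ U :=
  functor_map_eq_inf U W

noncomputable def infFunctorCompIso (U V : Opens X) :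
    infFunctor U ⋙ infFunctor V ≅ infFunctor (U ⊓ V) :=
  NatIso.ofComponents (fun W ↦ eqToIso (by simp [inf_assoc]))

end TopologicalSpace.Opens

namespace TopCat.Sheaf

variable (A : Type*) [Category.{u} A] {FA : A → A → Type*} {CA : A → Type u}
  [∀ X Y, FunLike (FA X Y) (CA X) (CA Y)] [ConcreteCategory.{u} A FA] [Limits.HasColimits A]
  [Limits.HasLimits A] [Limits.PreservesLimits (CategoryTheory.forget A)]
  [Limits.PreservesFilteredColimits (CategoryTheory.forget A)]
  [(CategoryTheory.forget A).ReflectsIsomorphisms]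
  {X : TopCat.{u}}

noncomputable def pullbackCompPushforwardInclusionIso (U : Opens X) :
    pullback A U.inclusion' ⋙ pushforward A U.inclusion' ≅
      (Opens.infFunctor U).sheafPushforwardContinuous A (Opens.grothendieckTopology X)
        (Opens.grothendieckTopology X) :=
  Functor.isoWhiskerRight (U.isOpenEmbedding.sheafPullbackIso A) _

noncomputable def pullbackCompPushforwardInclusionCompIso (U V : Opens X) :
    (pullback A V.inclusion' ⋙ pushforward A V.inclusion') ⋙
        (pullback A U.inclusion' ⋙ pushforward A U.inclusion') ≅
      pullback A (U ⊓ V).inclusion' ⋙ pushforward A (U ⊓ V).inclusion' :=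
  Functor.isoWhiskerRight (pullbackCompPushforwardInclusionIso A V) _ ≪≫
    Functor.isoWhiskerLeft _ (pullbackCompPushforwardInclusionIso A U) ≪≫
    Functor.sheafPushforwardContinuousComp' (Opens.infFunctorCompIso U V) A _ _ _ ≪≫
    (pullbackCompPushforwardInclusionIso A (U ⊓ V)).symm

end TopCat.Sheaf

theorem statement10 (R : Type u) [CommRing R] (X : TopCat.{u}) (U V : Opens X) :
    -- `q_U ∘ q_V ≅ q_{U ∩ V}`:
    Nonempty (qFunctor R X V ⋙ qFunctor R X U ≅ qFunctor R X (U ⊓ V)) ∧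
    -- `q_{U ∩ V} ≅ q_V ∘ q_U`:
    Nonempty (qFunctor R X (U ⊓ V) ≅ qFunctor R X U ⋙ qFunctor R X V) ∧
    -- in particular, the localization endofunctors `q_U` and `q_V` commute:
    Nonempty (qFunctor R X V ⋙ qFunctor R X U ≅ qFunctor R X U ⋙ qFunctor R X V) := by
  have key (U V : Opens X) : qFunctor R X V ⋙ qFunctor R X U ≅ qFunctor R X (U ⊓ V) :=
    TopCat.Sheaf.pullbackCompPushforwardInclusionCompIso (ModuleCat R) U V
  have hVU : qFunctor R X U ⋙ qFunctor R X V ≅ qFunctor R X (U ⊓ V) :=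
    key V U ≪≫ eqToIso (by rw [inf_comm])
  exact ⟨⟨key U V⟩, ⟨hVU.symm⟩, ⟨key U V ≪≫ hVU.symm⟩⟩
end

section
/- Let 𝒜 be an R-linear fibered category on a base category 𝒰 such that every fiber 𝒜(U) is an algebroid. Then there exists a twisted presheaf of R-algebras 𝒪 on 𝒰 (an R-linear fibered category all of whose fibers have exactly one object) and an equivalence of R-linear fibered categories 𝒪 ≅ 𝒜. -/
open CategoryTheory Limits

universe w v₂ u₂ v₁ u₁ u₀

variable {R : Type u₀} [CommRing R] {𝒰 : Type u₁} [Category.{v₁} 𝒰]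

/-!
Choose an object `A₀(U)` in every fiber and an isomorphism `A₀(U) ≅ A` for every `A`. The
one-object full subcategories on the `A₀(U)` form a fibered category: restrict `A₀(U)` along
`i : V ⟶ U` in `𝒜` and pull the result back to `A₀(V)` through the chosen isomorphism. The
twisting isomorphisms are those of `𝒜` conjugated by the chosen isomorphisms, so they inherit
the cocycle condition. The inclusions of these subcategories are compatible with restriction, and each one
is an equivalence since every object of `𝒜(U)` is isomorphic to `A₀(U)`.
-/

namespace CategoryTheory.ObjectProperty

variable {C : Type*} [Category C]

instance uniqueFullSubcategorySingleton (X : C) : Unique (singleton X).FullSubcategory where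
  default := ⟨X, ofObj_apply _ ()⟩
  uniq := by rintro ⟨_, ⟨⟩⟩; rfl

lemma isEquivalence_ι_of_iso {P : ObjectProperty C} (rep : C → P.FullSubcategory)
    (e : ∀ A, (rep A).obj ≅ A) : P.ι.IsEquivalence where
  essSurj := ⟨fun A => ⟨rep A, ⟨e A⟩⟩⟩

variable {P : ObjectProperty C} (rep : C → P.FullSubcategory) (e : ∀ A, (rep A).obj ≅ A)

/-- A quasi-inverse of `P.ι`. It is reducible so that `(retraction rep e).obj A` and `rep A` are
interchangeable in dependent types. -/
abbrev retraction : C ⥤ P.FullSubcategory where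
  obj := rep
  map {A B} f := homMk ((e A).hom ≫ f ≫ (e B).inv)

@[simps!]
def retractionCompι : retraction rep e ⋙ P.ι ≅ 𝟭 C :=
  NatIso.ofComponents e (by simp)

instance retraction_additive [Preadditive C] : (retraction rep e).Additive where
  map_add := by intros; ext; simp [Preadditive.comp_add, Preadditive.add_comp]; rfl

instance retraction_linear {S : Type*} [Semiring S] [Preadditive C] [Linear S C] :
    (retraction rep e).Linear S where
  map_smul := by intros; ext; simp; rfl

end CategoryTheory.ObjectProperty

open ObjectProperty

namespace LinearFibered

variable (𝒜 : LinearFibered.{v₂, u₂} R 𝒰) {P : ∀ U, ObjectProperty (𝒜.Fib U)}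
  (rep : ∀ U, 𝒜.Fib U → (P U).FullSubcategory) (e : ∀ U A, (rep U A).obj ≅ A)

def inducedRes {V U : 𝒰} (i : V ⟶ U) : (P U).FullSubcategory ⥤ (P V).FullSubcategory :=
  (P U).ι ⋙ 𝒜.res i ⋙ retraction (rep V) (e V)

def inducedτ {W V U : 𝒰} (j : W ⟶ V) (i : V ⟶ U) :
    𝒜.inducedRes rep e (j ≫ i) ≅ 𝒜.inducedRes rep e i ⋙ 𝒜.inducedRes rep e j :=
  Functor.isoWhiskerLeft (P U).ι <| Functor.isoWhiskerRight
    (𝒜.τ j i ≪≫ Functor.isoWhiskerLeft (𝒜.res i)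
      (Functor.isoWhiskerRight (retractionCompι (rep V) (e V)).symm (𝒜.res j)))
    (retraction (rep W) (e W))

lemma inducedRes_eqToHom_app_hom {V U : 𝒰} {i i' : V ⟶ U} (h : i = i')
    (h' : 𝒜.inducedRes rep e i = 𝒜.inducedRes rep e i') (X : (P U).FullSubcategory) :
    ((eqToHom h').app X).hom =
      (e V ((𝒜.res i).obj X.obj)).hom ≫ eqToHom (by rw [h]) ≫
        (e V ((𝒜.res i').obj X.obj)).inv := by
  subst h
  rw [eqToHom_refl]
  simp [inducedRes]

lemma inducedτ_cocycle {Z W V U : 𝒰} (k : Z ⟶ W) (j : W ⟶ V) (i : V ⟶ U) :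
    (𝒜.inducedτ rep e (k ≫ j) i).hom ≫
        Functor.whiskerLeft (𝒜.inducedRes rep e i) (𝒜.inducedτ rep e k j).hom =
      eqToHom (by rw [Category.assoc]) ≫ (𝒜.inducedτ rep e k (j ≫ i)).hom ≫
        Functor.whiskerRight (𝒜.inducedτ rep e j i).hom (𝒜.inducedRes rep e k) := by
  ext X
  have h := NatTrans.congr_app (𝒜.cocycle k j i) X.obj
  simp only [NatTrans.comp_app, Functor.whiskerLeft_app, Functor.whiskerRight_app,
    eqToHom_app] at h
  simp only [NatTrans.comp_app, FullSubcategory.comp_hom]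
  rw [inducedRes_eqToHom_app_hom _ _ _ (Category.assoc k j i)]
  simp [inducedτ, inducedRes, reassoc_of% h]

/-- Reducible, so that instance search and `simp` see `(𝒜.induced rep e).Fib U` as
`(P U).FullSubcategory`. -/
abbrev induced : LinearFibered.{v₂, u₂} R 𝒰 where
  Fib U := (P U).FullSubcategory
  res := 𝒜.inducedRes rep e
  resAdditive _ := inferInstanceAs (Functor.Additive (_ ⋙ _))
  resLinear _ := inferInstanceAs (Functor.Linear R (_ ⋙ _))
  τ := 𝒜.inducedτ rep e
  cocycle := 𝒜.inducedτ_cocycle rep e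

def inducedι : FiberedMor (𝒜.induced rep e) 𝒜 where
  app U := (P U).ι
  comm {V U} i := Functor.isoWhiskerLeft ((P U).ι ⋙ 𝒜.res i) (retractionCompι (rep V) (e V))
  comm_comp {W V U} j i := by
    ext X
    simp [inducedτ, inducedRes, ← Functor.map_comp]

end LinearFibered

theorem statement11 {R : Type u₀} [CommRing R] {𝒰 : Type u₁} [Category.{v₁} 𝒰]
    (𝒜 : LinearFibered.{v₂, u₂} R 𝒰)
    (halg : ∀ U : 𝒰, Nonempty (𝒜.Fib U) ∧ ∀ A A' : 𝒜.Fib U, Nonempty (A ≅ A')) :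
    ∃ (𝒪 : LinearFibered.{v₂, u₂} R 𝒰) (e : FiberedMor 𝒪 𝒜),
      (∀ U : 𝒰, Nonempty (Unique (𝒪.Fib U))) ∧
      (∀ U : 𝒰, (e.app U).IsEquivalence) := by
  let A₀ U : 𝒜.Fib U := (halg U).1.some
  let rep U (_ : 𝒜.Fib U) : (singleton (A₀ U)).FullSubcategory := default
  let e U A : (rep U A).obj ≅ A := ((halg U).2 (A₀ U) A).some
  exact ⟨𝒜.induced rep e, 𝒜.inducedι rep e,
    fun U => ⟨uniqueFullSubcategorySingleton (A₀ U)⟩,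
    fun U => isEquivalence_ι_of_iso (rep U) (e U)⟩
end
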